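/- The (r+1)-st singular value of A equals the distance in operator 2-norm from A to the set of matrices of rank at most r: σ_{r+1}(A) = min{ ‖A − B‖₂ : rank(B) ≤ r }. -/

import Mathlib

open Matrix Finset

/-- `σ : Fin (min m n) → ℝ` is the decreasing sequence of singular values of `A`:
nonnegative, antitone, and `A` has a singular value decomposition with these values. -/
def IsSingularValues {m n : ℕ} (A : Matrix (Fin m) (Fin n) ℂ)
    (σ : Fin (min m n) → ℝ) : Prop :=
  Antitone σ ∧ (∀ i, 0 ≤ σ i) ∧
  ∃ U ∈ Matrix.unitaryGroup (Fin m) ℂ, ∃ V ∈ Matrix.unitaryGroup (Fin n) ℂ,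
    A = U * (Matrix.of fun (i : Fin m) (j : Fin n) =>
        if h : (i : ℕ) = (j : ℕ) ∧ (i : ℕ) < min m n
        then (σ ⟨(i : ℕ), h.2⟩ : ℂ) else 0) * V

/-- The spectral (operator 2-) norm of a matrix. -/
noncomputable def specNorm {m n : ℕ} (A : Matrix (Fin m) (Fin n) ℂ) : ℝ :=
  ‖LinearMap.toContinuousLinearMap (Matrix.toEuclideanLin A)‖

/-!
Write `A = U Σ V` with `U, V` unitary and `Σ` rectangular diagonal. Multiplying by unitaries
and passing to a submatrix do not increase the spectral norm. If `rank B ≤ r`, the leading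
`(r+1) × (r+1)` block of `Σ - U⋆ B V⋆` is `diag(σ₀, …, σᵣ)` minus a matrix of rank `≤ r`;
evaluated on a kernel vector of the latter it stretches by at least `σᵣ`, so
`‖A - B‖ ≥ σᵣ`. Conversely, cutting `Σ` off after its first `r` entries gives a matrix of rank
`≤ r` at distance `‖diag(σᵣ, σᵣ₊₁, …)‖ = σᵣ` from `A`.
-/

open scoped Matrix.Norms.L2Operator

namespace Matrix

lemma exists_mulVec_eq_zero_of_rank_lt {m n K : Type*} [Fintype n] [Field K] (C : Matrix m n K)
    (hC : C.rank < Fintype.card n) : ∃ v ≠ 0, C *ᵥ v = 0 := by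
  have hdim := C.mulVecLin.finrank_range_add_finrank_ker
  rw [Module.finrank_fintype_fun_eq_card, ← rank] at hdim
  have hker : LinearMap.ker C.mulVecLin ≠ ⊥ := Submodule.one_le_finrank_iff.mp (by omega)
  obtain ⟨v, hv, hv0⟩ := Submodule.exists_mem_ne_zero_of_ne_bot hker
  exact ⟨v, hv0, hv⟩

variable {𝕜 : Type*} [RCLike 𝕜] {l m n p : Type*} [Fintype l] [Fintype m] [Fintype n] [Fintype p]

lemma l2_opNorm_one_le [DecidableEq n] : ‖(1 : Matrix n n 𝕜)‖ ≤ 1 := by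
  rw [← diagonal_one, l2_opNorm_diagonal]
  exact (pi_norm_const_le (1 : 𝕜)).trans norm_one.le

lemma l2_opNorm_le_one_of_conjTranspose_mul_self [DecidableEq n] {X : Matrix m n 𝕜}
    (hX : Xᴴ * X = 1) : ‖X‖ ≤ 1 := by
  have h : ‖X‖ * ‖X‖ ≤ 1 := by
    rw [← l2_opNorm_conjTranspose_mul_self, hX]
    exact l2_opNorm_one_le
  nlinarith [norm_nonneg X]

lemma l2_opNorm_le_one_of_mem_unitaryGroup [DecidableEq n] {U : Matrix n n 𝕜}
    (hU : U ∈ unitaryGroup n 𝕜) : ‖U‖ ≤ 1 :=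
  l2_opNorm_le_one_of_conjTranspose_mul_self (mem_unitaryGroup_iff'.mp hU)

lemma l2_opNorm_one_submatrix_id_le [DecidableEq m] [DecidableEq l] {f : l → m}
    (hf : f.Injective) : ‖(1 : Matrix m m 𝕜).submatrix id f‖ ≤ 1 := by
  refine l2_opNorm_le_one_of_conjTranspose_mul_self ?_
  rw [conjTranspose_submatrix, conjTranspose_one, ← submatrix_mul _ _ _ _ _ Function.bijective_id,
    Matrix.one_mul, submatrix_one _ hf]

lemma l2_opNorm_mul_mul_le [DecidableEq m] [DecidableEq n] [DecidableEq p] {X : Matrix l m 𝕜}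
    {Y : Matrix n p 𝕜} (hX : ‖X‖ ≤ 1) (hY : ‖Y‖ ≤ 1) (A : Matrix m n 𝕜) : ‖X * A * Y‖ ≤ ‖A‖ :=
  calc ‖X * A * Y‖ ≤ ‖X‖ * ‖A‖ * ‖Y‖ :=
        (l2_opNorm_mul _ _).trans (by gcongr; exact l2_opNorm_mul _ _)
    _ ≤ 1 * ‖A‖ * 1 := by gcongr
    _ = ‖A‖ := by ring

lemma l2_opNorm_submatrix_le [DecidableEq m] [DecidableEq n] [DecidableEq l] [DecidableEq p]
    (A : Matrix m n 𝕜) {f : l → m} {g : p → n} (hf : f.Injective) (hg : g.Injective) :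
    ‖A.submatrix f g‖ ≤ ‖A‖ := by
  have hsub : A.submatrix f g =
      (1 : Matrix m m 𝕜).submatrix f id * A * (1 : Matrix n n 𝕜).submatrix id g := by
    ext i j
    simp [mul_apply, one_apply]
  rw [hsub]
  refine l2_opNorm_mul_mul_le ?_ (l2_opNorm_one_submatrix_id_le hg) A
  rw [← l2_opNorm_conjTranspose, conjTranspose_submatrix, conjTranspose_one]
  exact l2_opNorm_one_submatrix_id_le hf

lemma mul_norm_le_norm_toEuclideanLin_diagonal [DecidableEq n] {d : n → 𝕜} {c : ℝ}
    (hd : ∀ i, c ≤ ‖d i‖) (x : EuclideanSpace 𝕜 n) :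
    c * ‖x‖ ≤ ‖toEuclideanLin (diagonal d) x‖ := by
  rcases lt_or_ge c 0 with hc | hc
  · exact (mul_nonpos_of_nonpos_of_nonneg hc.le (norm_nonneg x)).trans (norm_nonneg _)
  refine le_of_sq_le_sq ?_ (norm_nonneg _)
  rw [mul_pow, EuclideanSpace.norm_sq_eq, EuclideanSpace.norm_sq_eq, Finset.mul_sum]
  refine Finset.sum_le_sum fun i _ => ?_
  simp only [toLpLin_apply, mulVec_diagonal, norm_mul, mul_pow]
  gcongr
  exact hd i

lemma le_l2_opNorm_diagonal_sub [DecidableEq n] {d : n → 𝕜} {c : ℝ} (hd : ∀ i, c ≤ ‖d i‖)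
    (C : Matrix n n 𝕜) (hC : C.rank < Fintype.card n) : c ≤ ‖diagonal d - C‖ := by
  obtain ⟨v, hv0, hCv⟩ := C.exists_mulVec_eq_zero_of_rank_lt hC
  set x : EuclideanSpace 𝕜 n := WithLp.toLp 2 v
  have hx : 0 < ‖x‖ := norm_pos_iff.mpr (by simpa [x] using hv0)
  have hsub : toEuclideanLin (diagonal d - C) x = toEuclideanLin (diagonal d) x := by
    simp [x, hCv]
  refine le_of_mul_le_mul_right ?_ hx
  calc c * ‖x‖ ≤ ‖toEuclideanLin (diagonal d - C) x‖ :=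
        hsub ▸ mul_norm_le_norm_toEuclideanLin_diagonal hd x
    _ ≤ ‖diagonal d - C‖ * ‖x‖ :=
        ((toEuclideanLin.trans LinearMap.toContinuousLinearMap) (diagonal d - C)).le_opNorm x

end Matrix

section RectDiagonal

variable {α : Type*} {m n : ℕ}

def rectDiagonal [Zero α] (d : Fin (min m n) → α) : Matrix (Fin m) (Fin n) α :=
  Matrix.of fun (i : Fin m) (j : Fin n) =>
    if h : (i : ℕ) = (j : ℕ) ∧ (i : ℕ) < min m n then d ⟨(i : ℕ), h.2⟩ else 0

lemma rectDiagonal_sub [AddGroup α] (d e : Fin (min m n) → α) :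
    rectDiagonal (d - e) = rectDiagonal d - rectDiagonal e := by
  ext i j
  simp only [rectDiagonal, of_apply, Matrix.sub_apply, Pi.sub_apply]
  split_ifs <;> simp

lemma rectDiagonal_submatrix_castLE [Zero α] (d : Fin (min m n) → α) {k : ℕ} (hk : k ≤ min m n) :
    (rectDiagonal d).submatrix (Fin.castLE (hk.trans (min_le_left m n)))
      (Fin.castLE (hk.trans (min_le_right m n))) = diagonal fun i => d (Fin.castLE hk i) := by
  ext i j
  simp only [rectDiagonal, submatrix_apply, of_apply, diagonal_apply, Fin.val_castLE, Fin.ext_iff]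
  split_ifs with h h' h' <;> first | rfl | omega

lemma rectDiagonal_eq_submatrix_diagonal [Zero α] (d : Fin (min m n) → α) :
    rectDiagonal d = (diagonal (Function.extend (Fin.castLE min_le_max) d 0)).submatrix
      (Fin.castLE (le_max_left m n)) (Fin.castLE (le_max_right m n)) := by
  ext i j
  simp only [rectDiagonal, submatrix_apply, of_apply, diagonal_apply, Fin.ext_iff, Fin.val_castLE]
  split_ifs with h h' h'
  · exact ((Fin.castLE_injective _).extend_apply d 0 ⟨i, h.2⟩).symm
  · exact absurd h.1 h'
  · exact absurd ⟨h', lt_min i.isLt (h' ▸ j.isLt)⟩ h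
  · rfl

lemma l2_opNorm_rectDiagonal_le {𝕜 : Type*} [RCLike 𝕜] (d : Fin (min m n) → 𝕜) :
    ‖rectDiagonal d‖ ≤ ‖d‖ := by
  rw [rectDiagonal_eq_submatrix_diagonal]
  refine (l2_opNorm_submatrix_le _ (Fin.castLE_injective _) (Fin.castLE_injective _)).trans ?_
  rw [l2_opNorm_diagonal]
  refine (pi_norm_le_iff_of_nonneg (norm_nonneg d)).mpr fun i => ?_
  by_cases hi : ∃ k : Fin (min m n), Fin.castLE min_le_max k = i
  · obtain ⟨k, rfl⟩ := hi
    rw [(Fin.castLE_injective _).extend_apply]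
    exact norm_le_pi_norm d k
  · rw [Function.extend_apply' _ _ _ hi, Pi.zero_apply, norm_zero]
    exact norm_nonneg d

lemma rank_rectDiagonal_le {K : Type*} [Field K] (d : Fin (min m n) → K) {r : ℕ}
    (hd : ∀ k : Fin (min m n), r ≤ (k : ℕ) → d k = 0) : (rectDiagonal d).rank ≤ r := by
  classical
  rw [rectDiagonal_eq_submatrix_diagonal]
  refine (rank_submatrix_le _ _ _).trans ?_
  rw [rank_diagonal]
  have hlt : ∀ i : {i // Function.extend (Fin.castLE min_le_max) d 0 i ≠ 0}, (i : ℕ) < r := by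
    rintro ⟨i, hi⟩
    by_cases hk : ∃ k : Fin (min m n), Fin.castLE min_le_max k = i
    · obtain ⟨k, rfl⟩ := hk
      rw [(Fin.castLE_injective _).extend_apply] at hi
      by_contra hkr
      exact hi (hd k (not_lt.mp hkr))
    · exact absurd (Function.extend_apply' _ _ _ hk) hi
  calc _ ≤ Fintype.card (Fin r) :=
        Fintype.card_le_of_injective (fun i => (⟨i.1, hlt i⟩ : Fin r)) fun i j hij => by
          simpa [Fin.ext_iff, Subtype.ext_iff] using hij
    _ = r := Fintype.card_fin r

end RectDiagonal

lemma specNorm_eq_l2_opNorm {m n : ℕ} (A : Matrix (Fin m) (Fin n) ℂ) : specNorm A = ‖A‖ := rfl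

namespace IsSingularValues

variable {m n r : ℕ} {A : Matrix (Fin m) (Fin n) ℂ} {σ : Fin (min m n) → ℝ}

lemma le_specNorm_sub (hσ : IsSingularValues A σ) (hr : r < min m n)
    {B : Matrix (Fin m) (Fin n) ℂ} (hB : B.rank ≤ r) : σ ⟨r, hr⟩ ≤ specNorm (A - B) := by
  obtain ⟨hanti, -, U, hU, V, hV, hA⟩ := hσ
  change A = U * rectDiagonal (fun k => (σ k : ℂ)) * V at hA
  have hk : r + 1 ≤ min m n := hr
  have hUAV : Uᴴ * (A - B) * Vᴴ = rectDiagonal (fun k => (σ k : ℂ)) - Uᴴ * B * Vᴴ := by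
    have hU' : Uᴴ * U = 1 := mem_unitaryGroup_iff'.mp hU
    have hV' : V * Vᴴ = 1 := mem_unitaryGroup_iff.mp hV
    rw [hA, Matrix.mul_sub, Matrix.sub_mul]
    simp only [← Matrix.mul_assoc, hU', Matrix.one_mul]
    rw [Matrix.mul_assoc (rectDiagonal _), hV', Matrix.mul_one]
  have hrank : ((Uᴴ * B * Vᴴ).submatrix (Fin.castLE (hk.trans (min_le_left m n)))
      (Fin.castLE (hk.trans (min_le_right m n)))).rank < Fintype.card (Fin (r + 1)) := by
    rw [Fintype.card_fin, Nat.lt_succ_iff]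
    exact (rank_submatrix_le _ _ _).trans <|
      (rank_mul_le_left _ _).trans <| (rank_mul_le_right _ _).trans hB
  calc σ ⟨r, hr⟩
      ≤ ‖(rectDiagonal (fun k => (σ k : ℂ)) - Uᴴ * B * Vᴴ).submatrix
          (Fin.castLE (hk.trans (min_le_left m n))) (Fin.castLE (hk.trans (min_le_right m n)))‖ := by
        rw [submatrix_sub, Pi.sub_apply, Pi.sub_apply, rectDiagonal_submatrix_castLE _ hk]
        refine le_l2_opNorm_diagonal_sub (fun i => ?_) _ hrank
        rw [Complex.norm_real, Real.norm_eq_abs]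
        exact (hanti (Nat.lt_succ_iff.mp i.isLt : Fin.castLE hk i ≤ ⟨r, hr⟩)).trans (le_abs_self _)
    _ ≤ ‖rectDiagonal (fun k => (σ k : ℂ)) - Uᴴ * B * Vᴴ‖ :=
        l2_opNorm_submatrix_le _ (Fin.castLE_injective _) (Fin.castLE_injective _)
    _ = ‖Uᴴ * (A - B) * Vᴴ‖ := by rw [hUAV]
    _ ≤ specNorm (A - B) :=
        l2_opNorm_mul_mul_le (l2_opNorm_le_one_of_mem_unitaryGroup (Unitary.star_mem hU))
          (l2_opNorm_le_one_of_mem_unitaryGroup (Unitary.star_mem hV)) _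

lemma exists_rank_le_specNorm_sub_le (hσ : IsSingularValues A σ) (hr : r < min m n) :
    ∃ B : Matrix (Fin m) (Fin n) ℂ, B.rank ≤ r ∧ specNorm (A - B) ≤ σ ⟨r, hr⟩ := by
  obtain ⟨hanti, hnonneg, U, hU, V, hV, hA⟩ := hσ
  change A = U * rectDiagonal (fun k => (σ k : ℂ)) * V at hA
  set head : Fin (min m n) → ℂ := fun k => if (k : ℕ) < r then (σ k : ℂ) else 0
  refine ⟨U * rectDiagonal head * V, ?_, ?_⟩
  · exact (rank_mul_le_left _ _).trans <| (rank_mul_le_right _ _).trans <|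
      rank_rectDiagonal_le _ fun k hk => if_neg (not_lt.mpr hk)
  have hsub : A - U * rectDiagonal head * V =
      U * rectDiagonal ((fun k => (σ k : ℂ)) - head) * V := by
    rw [hA, rectDiagonal_sub, Matrix.mul_sub, Matrix.sub_mul]
  have htail : ‖(fun k => (σ k : ℂ)) - head‖ ≤ σ ⟨r, hr⟩ := by
    refine (pi_norm_le_iff_of_nonneg (hnonneg _)).mpr fun k => ?_
    by_cases hk : (k : ℕ) < r
    · simp [head, hk, hnonneg]
    · simp only [head, hk, Pi.sub_apply, if_false, sub_zero, Complex.norm_real, Real.norm_eq_abs,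
        abs_of_nonneg (hnonneg k)]
      exact hanti (not_lt.mp hk : (⟨r, hr⟩ : Fin (min m n)) ≤ k)
  calc specNorm (A - U * rectDiagonal head * V)
      = ‖U * rectDiagonal ((fun k => (σ k : ℂ)) - head) * V‖ := by
        rw [specNorm_eq_l2_opNorm, hsub]
    _ ≤ ‖rectDiagonal ((fun k => (σ k : ℂ)) - head)‖ :=
        l2_opNorm_mul_mul_le (l2_opNorm_le_one_of_mem_unitaryGroup hU)
          (l2_opNorm_le_one_of_mem_unitaryGroup hV) _
    _ ≤ σ ⟨r, hr⟩ := (l2_opNorm_rectDiagonal_le _).trans htail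

end IsSingularValues

/-- `σ_{r+1}(A)` is the spectral-norm distance from `A` to the set of matrices of
rank at most `r`. -/
theorem singularValue_eq_dist_lowRank {m n r : ℕ} (A : Matrix (Fin m) (Fin n) ℂ)
    (σ : Fin (min m n) → ℝ) (hσ : IsSingularValues A σ) (hr : r < min m n) :
    σ ⟨r, hr⟩ =
      sInf {x : ℝ | ∃ B : Matrix (Fin m) (Fin n) ℂ, B.rank ≤ r ∧ x = specNorm (A - B)} := by
  obtain ⟨B₀, hB₀, hAB₀⟩ := hσ.exists_rank_le_specNorm_sub_le hr
  apply le_antisymm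
  · refine le_csInf ⟨specNorm (A - B₀), B₀, hB₀, rfl⟩ ?_
    rintro _ ⟨B, hB, rfl⟩
    exact hσ.le_specNorm_sub hr hB
  · refine le_trans (csInf_le ⟨0, ?_⟩ ⟨B₀, hB₀, rfl⟩) hAB₀
    rintro _ ⟨B, -, rfl⟩
    exact norm_nonneg _
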